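/- Let C be a nontrivial 1-perfect code in the Johnson scheme J(2w+a, w) with w ≥ 1, a ≥ 0. Then C is k-regular for every positive integer k with k < L(w,a), where L(w,a) = (2w + a + 1 − √((a+1)² + 4(w−1)))/2. -/

import Mathlib

open scoped BigOperators

/-- A code in the Johnson scheme `J(n,w)`: a set of `w`-element subsets of `{1,…,n}`. -/
def IsJohnsonCode (n w : ℕ) (C : Set (Finset (Fin n))) : Prop :=
  ∀ c ∈ C, c.card = w

/-- `C` is a 1-perfect code in `J(n,w)`: every `w`-subset of `{1,…,n}` is within Johnson
distance 1 (Johnson distance between `w`-sets `x`, `y` is `w - |x ∩ y|`) of exactly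
one codeword of `C`. -/
def IsOnePerfect (n w : ℕ) (C : Set (Finset (Fin n))) : Prop :=
  IsJohnsonCode n w C ∧
    ∀ s : Finset (Fin n), s.card = w → ∃! c, c ∈ C ∧ w - (c ∩ s).card ≤ 1

/-- `C` is `k`-regular: (1) the number of codewords meeting a `k`-set `A` in exactly `i`
points depends only on `i`, and (2) for each `k`-set `A`, the number of codewords `c`
with `c ∩ A = I` depends only on `|I|` (for `I ⊆ A`). -/
def IsKRegularCode (n k : ℕ) (C : Set (Finset (Fin n))) : Prop :=
  (∃ α : ℕ → ℕ, ∀ A : Finset (Fin n), A.card = k → ∀ i, i ≤ k →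
      {c ∈ C | (c ∩ A).card = i}.ncard = α i) ∧
  (∀ A : Finset (Fin n), A.card = k → ∃ β : ℕ → ℕ,
      ∀ I : Finset (Fin n), I ⊆ A → {c ∈ C | c ∩ A = I}.ncard = β I.card)

/-- `L(w,a) = (2w + a + 1 - √((a+1)² + 4(w-1))) / 2`, the smaller root of
`m² - (2w+a+1)m + w(w+a) + 1`. -/
noncomputable def Lwa (w a : ℕ) : ℝ :=
  (2 * (w : ℝ) + a + 1 - Real.sqrt (((a : ℝ) + 1) ^ 2 + 4 * ((w : ℝ) - 1))) / 2


/-!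
Fix a `k`-set `A` and count the `w`-subsets of its complement: each is covered by exactly one
codeword, a codeword disjoint from `A` covers `1 + w m` of them, one meeting `A` in a single point
covers `m + 1`, and any other codeword none (here `n = w + k + m`). The codewords meeting `A` in one
point are counted, via `c ∩ A = {x}`, by the codewords avoiding the `(k-1)`-sets `A \ {x}`. So if
the number of codewords avoiding a `(k-1)`-set is independent of that set, the number `p_A` of
codewords avoiding `A` satisfies `p_A (1 + w m - k (m + 1)) = const`. For `k < L(w,a)` the factor
`1 + w m - k (m + 1) = σ_1(w,a,k)` is positive, which determines `p_A`. The identity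
`#{c | c ∩ A = I} + #{c | c ∩ A = I ∪ {x}} = #{c | c ∩ (A \ {x}) = I}`
then propagates this to all traces, by induction on `k` and on `|I|`.
-/

open Finset

section

variable {α : Type*} [DecidableEq α]

def traceCount (C : Finset (Finset α)) (A I : Finset α) : ℕ := #{c ∈ C | c ∩ A = I}

def TraceUniform (C : Finset (Finset α)) (k : ℕ) : Prop :=
  ∀ ⦃A B I J : Finset α⦄, #A = k → #B = k → I ⊆ A → J ⊆ B → #I = #J →
    traceCount C A I = traceCount C B J

theorem traceCount_add_traceCount_insert (C : Finset (Finset α)) {A I : Finset α} {x : α}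
    (hx : x ∈ A) (hxI : x ∉ I) :
    traceCount C A I + traceCount C A (insert x I) = traceCount C (A.erase x) I := by
  have hnot (c : Finset α) : c ∩ A = I ↔ c ∩ A.erase x = I ∧ x ∉ c :=
    ⟨by rintro rfl; grind, fun ⟨h, hxc⟩ => by ext u; grind⟩
  have hin (c : Finset α) : c ∩ A = insert x I ↔ c ∩ A.erase x = I ∧ x ∈ c :=
    ⟨fun h => by grind, fun ⟨h, hxc⟩ => by ext u; grind⟩
  simp only [traceCount, filter_congr (fun c _ => hnot c), filter_congr (fun c _ => hin c),
    ← filter_filter]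
  rw [add_comm]
  exact card_filter_add_card_filter_not _

theorem card_filter_card_inter_eq_sum_traceCount (C : Finset (Finset α)) (A : Finset α)
    (i : ℕ) :
    #{c ∈ C | #(c ∩ A) = i} = ∑ I ∈ A.powersetCard i, traceCount C A I := by
  rw [card_eq_sum_card_fiberwise (f := (· ∩ A)) (t := A.powersetCard i)]
  · refine sum_congr rfl fun I hI => ?_
    rw [traceCount, filter_filter]
    refine congrArg card (filter_congr fun c _ => ?_)
    rw [mem_powersetCard] at hI
    exact ⟨And.right, fun h => ⟨h ▸ hI.2, h⟩⟩
  · intro c hc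
    exact mem_powersetCard.2 ⟨inter_subset_right, (mem_filter.1 hc).2⟩

theorem traceUniform_zero (C : Finset (Finset α)) : TraceUniform C 0 := by
  intro A B I J hA hB hI hJ _
  obtain rfl := card_eq_zero.1 hA
  obtain rfl := card_eq_zero.1 hB
  rw [subset_empty.1 hI, subset_empty.1 hJ]

theorem TraceUniform.succ {C : Finset (Finset α)} {k : ℕ} (h : TraceUniform C k)
    (hempty : ∀ ⦃A B : Finset α⦄, #A = k + 1 → #B = k + 1 →
      traceCount C A ∅ = traceCount C B ∅) :
    TraceUniform C (k + 1) := by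
  intro A B I J hA hB hIA hJB hIJ
  obtain ⟨i, hI⟩ : ∃ i, #I = i := ⟨_, rfl⟩
  induction i generalizing I J with
  | zero => rw [card_eq_zero.1 hI, card_eq_zero.1 (hIJ.symm.trans hI)]; exact hempty hA hB
  | succ i ih =>
    obtain ⟨x, hx⟩ := card_pos.1 (by omega : 0 < #I)
    obtain ⟨y, hy⟩ := card_pos.1 (by omega : 0 < #J)
    have hA' := traceCount_add_traceCount_insert C (hIA hx) (notMem_erase x I)
    have hB' := traceCount_add_traceCount_insert C (hJB hy) (notMem_erase y J)
    rw [insert_erase hx] at hA'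
    rw [insert_erase hy] at hB'
    have herase : traceCount C (A.erase x) (I.erase x) = traceCount C (B.erase y) (J.erase y) :=
      h (by rw [card_erase_of_mem (hIA hx), hA]; rfl) (by rw [card_erase_of_mem (hJB hy), hB]; rfl)
        (erase_subset_erase x hIA) (erase_subset_erase y hJB)
        (by rw [card_erase_of_mem hx, card_erase_of_mem hy, hIJ])
    have hsmaller : traceCount C A (I.erase x) = traceCount C B (J.erase y) :=
      ih ((erase_subset x I).trans hIA) ((erase_subset y J).trans hJB)
        (by rw [card_erase_of_mem hx, card_erase_of_mem hy, hIJ])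
        (by rw [card_erase_of_mem hx, hI]; rfl)
    omega

theorem TraceUniform.card_filter_card_inter_eq {C : Finset (Finset α)} {k : ℕ}
    (h : TraceUniform C k) {A B : Finset α} (hA : #A = k) (hB : #B = k) (i : ℕ) :
    #{c ∈ C | #(c ∩ A) = i} = #{c ∈ C | #(c ∩ B) = i} := by
  rw [card_filter_card_inter_eq_sum_traceCount, card_filter_card_inter_eq_sum_traceCount]
  obtain hi | ⟨J₀, hJ₀⟩ := (B.powersetCard i).eq_empty_or_nonempty
  · rw [hi, powersetCard_eq_empty.2 (hA ▸ hB ▸ powersetCard_eq_empty.1 hi), sum_empty,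
      sum_empty]
  rw [mem_powersetCard] at hJ₀
  rw [sum_const_nat (m := traceCount C B J₀), sum_const_nat (m := traceCount C B J₀),
      card_powersetCard, card_powersetCard, hA, hB] <;>
    intro I hI <;> rw [mem_powersetCard] at hI
  · exact h hB hB hI.1 hJ₀.1 (hI.2.trans hJ₀.2.symm)
  · exact h hA hB hI.1 hJ₀.1 (hI.2.trans hJ₀.2.symm)

theorem card_filter_powersetCard_card_inter (U c : Finset α) (i j : ℕ) :
    #{s ∈ U.powersetCard (i + j) | #(s ∩ c) = i} =
      (#(U ∩ c)).choose i * (#(U \ c)).choose j := by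
  rw [← card_powersetCard, ← card_powersetCard, ← card_product]
  refine card_nbij' (fun s => (s ∩ c, s \ c)) (fun p => p.1 ∪ p.2) ?_ ?_ ?_ ?_ <;>
    intro s hs <;> simp only [mem_coe, mem_filter, mem_product, mem_powersetCard] at hs ⊢
  · refine ⟨⟨inter_subset_inter_right hs.1.1, hs.2⟩, sdiff_subset_sdiff hs.1.1 subset_rfl,
      ?_⟩
    have := card_inter_add_card_sdiff s c
    omega
  · obtain ⟨⟨h1, hi⟩, h2, hj⟩ := hs
    have hdisj : Disjoint s.1 s.2 :=
      (disjoint_sdiff.mono_right h2).mono_left (h1.trans inter_subset_right)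
    refine ⟨⟨union_subset (h1.trans inter_subset_left) (h2.trans sdiff_subset), ?_⟩, ?_⟩
    · rw [card_union_of_disjoint hdisj, hi, hj]
    · rw [union_inter_distrib_right, inter_eq_left.2 (h1.trans inter_subset_right),
        disjoint_iff_inter_eq_empty.1 (disjoint_of_subset_left h2 sdiff_disjoint), union_empty, hi]
  · exact sup_inf_sdiff s c
  · obtain ⟨⟨h1, -⟩, h2, -⟩ := hs
    ext x <;> grind

theorem card_eq_sum_card_filter_dist_le_one {w : ℕ} {C : Finset (Finset α)}
    (hcover : ∀ s : Finset α, #s = w → ∃! c, c ∈ C ∧ w - #(c ∩ s) ≤ 1)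
    (T : Finset (Finset α)) (hT : ∀ s ∈ T, #s = w) :
    #T = ∑ c ∈ C, #{s ∈ T | w - #(c ∩ s) ≤ 1} := by
  simp only [card_filter]
  rw [sum_comm, card_eq_sum_ones]
  refine sum_congr rfl fun s hs => ?_
  rw [← card_filter, eq_comm, card_eq_one_iff_existsUnique]
  simpa only [mem_filter] using hcover s (hT s hs)

variable [Fintype α]

theorem card_filter_dist_le_one_powersetCard_compl {w k m : ℕ} {A c : Finset α}
    (hw : 1 ≤ w) (hc : #c = w) (hA : #A = k) (hn : Fintype.card α = w + k + m) :
    #{s ∈ Aᶜ.powersetCard w | w - #(c ∩ s) ≤ 1} =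
      (if c ∩ A = ∅ then 1 else 0) * (1 + w * m) +
        (if #(c ∩ A) = 1 then 1 else 0) * (m + 1) := by
  obtain ⟨v, rfl⟩ : ∃ v, w = v + 1 := ⟨w - 1, by omega⟩
  -- `v + 1 + 0` is the shape `i + j` of `card_filter_powersetCard_card_inter` with `j = 0`.
  have hsplit : {s ∈ Aᶜ.powersetCard (v + 1) | v + 1 - #(c ∩ s) ≤ 1} =
      {s ∈ Aᶜ.powersetCard (v + 1 + 0) | #(s ∩ c) = v + 1} ∪
        {s ∈ Aᶜ.powersetCard (v + 1) | #(s ∩ c) = v} := by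
    rw [add_zero, ← filter_or]
    refine filter_congr fun s hs => ?_
    have : #(s ∩ c) ≤ v + 1 :=
      (card_le_card inter_subset_left).trans (mem_powersetCard.1 hs).2.le
    rw [inter_comm]
    omega
  rw [hsplit, card_union_of_disjoint (disjoint_filter.2 fun s _ h => by omega),
    card_filter_powersetCard_card_inter _ _ v 1, card_filter_powersetCard_card_inter _ _ (v + 1) 0]
  have hin : #(Aᶜ ∩ c) = v + 1 - #(c ∩ A) := by
    rw [inter_comm, ← sdiff_eq_inter_compl, card_sdiff, hc, inter_comm]
  have hout : #(Aᶜ \ c) = m + #(c ∩ A) := by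
    have := card_union_add_card_inter c A
    rw [sdiff_eq_inter_compl, ← compl_union, card_compl, union_comm]
    omega
  have hle : #(c ∩ A) ≤ v + 1 := hc ▸ card_le_card inter_subset_left
  rw [hin, hout]
  obtain h0 | h1 | h2 : #(c ∩ A) = 0 ∨ #(c ∩ A) = 1 ∨ 2 ≤ #(c ∩ A) := by omega
  · rw [if_pos (card_eq_zero.1 h0), h0]
    simp
  · have hne : c ∩ A ≠ ∅ := fun h => by simp [h] at h1
    rw [if_neg hne, if_pos h1, h1, Nat.choose_eq_zero_of_lt (by omega)]
    simp
  · have hne : c ∩ A ≠ ∅ := fun h => by simp [h] at h2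
    rw [if_neg hne, if_neg (by omega),
      Nat.choose_eq_zero_of_lt (show v + 1 - #(c ∩ A) < v + 1 by omega),
      Nat.choose_eq_zero_of_lt (show v + 1 - #(c ∩ A) < v by omega)]
    simp

theorem choose_eq_traceCount_empty_mul_add {w k m : ℕ} {C : Finset (Finset α)} {A : Finset α}
    (hw : 1 ≤ w) (hcard : ∀ c ∈ C, #c = w)
    (hcover : ∀ s : Finset α, #s = w → ∃! c, c ∈ C ∧ w - #(c ∩ s) ≤ 1)
    (hA : #A = k) (hn : Fintype.card α = w + k + m) :
    (w + m).choose w =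
      traceCount C A ∅ * (1 + w * m) + #{c ∈ C | #(c ∩ A) = 1} * (m + 1) := by
  calc (w + m).choose w = #(Aᶜ.powersetCard w) := by
        rw [card_powersetCard, card_compl, hA, hn, Nat.add_right_comm, Nat.add_sub_cancel]
    _ = ∑ c ∈ C, #{s ∈ Aᶜ.powersetCard w | w - #(c ∩ s) ≤ 1} :=
        card_eq_sum_card_filter_dist_le_one hcover _ fun s hs => (mem_powersetCard.1 hs).2
    _ = ∑ c ∈ C, ((if c ∩ A = ∅ then 1 else 0) * (1 + w * m) +
          (if #(c ∩ A) = 1 then 1 else 0) * (m + 1)) :=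
        sum_congr rfl fun c hc => card_filter_dist_le_one_powersetCard_compl hw (hcard c hc) hA hn
    _ = _ := by rw [sum_add_distrib, ← sum_mul, ← sum_mul, sum_boole, sum_boole]; rfl

theorem traceCount_empty_mul_eq {w k m t : ℕ} {C : Finset (Finset α)} {A : Finset α}
    (hw : 1 ≤ w) (hcard : ∀ c ∈ C, #c = w)
    (hcover : ∀ s : Finset α, #s = w → ∃! c, c ∈ C ∧ w - #(c ∩ s) ≤ 1)
    (hA : #A = k) (hn : Fintype.card α = w + k + m)
    (ht : ∀ x ∈ A, traceCount C (A.erase x) ∅ = t) :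
    (traceCount C A ∅ : ℤ) * (1 + w * m - k * (m + 1)) =
      (w + m).choose w - k * t * (m + 1) := by
  have hsingle : #{c ∈ C | #(c ∩ A) = 1} + k * traceCount C A ∅ = k * t := by
    rw [card_filter_card_inter_eq_sum_traceCount, powersetCard_one, sum_map, ← hA,
      ← smul_eq_mul, ← sum_const, ← sum_add_distrib, ← smul_eq_mul, ← sum_const]
    refine sum_congr rfl fun x hx => ?_
    rw [← ht x hx, ← traceCount_add_traceCount_insert C hx (notMem_empty x), insert_empty,
      add_comm]
    rfl
  have hmaster := choose_eq_traceCount_empty_mul_add hw hcard hcover hA hn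
  zify at hsingle hmaster
  linear_combination -hmaster - (m + 1 : ℤ) * hsingle

theorem traceUniform_of_perfect {w : ℕ} {C : Finset (Finset α)} (hw : 1 ≤ w)
    (hcard : ∀ c ∈ C, #c = w)
    (hcover : ∀ s : Finset α, #s = w → ∃! c, c ∈ C ∧ w - #(c ∩ s) ≤ 1) :
    ∀ {k m : ℕ}, Fintype.card α = w + k + m → k * (m + 1) < 1 + w * m → TraceUniform C k
  | 0, _, _, _ => traceUniform_zero C
  | k + 1, m, hn, hσ => by
    have h : TraceUniform C k :=
      traceUniform_of_perfect hw hcard hcover (m := m + 1) (by omega) (by nlinarith)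
    refine h.succ fun A B hA hB => ?_
    obtain ⟨x₀, hx₀⟩ := card_pos.1 (by omega : 0 < #A)
    have hconst : ∀ D : Finset α, #D = k + 1 →
        ∀ x ∈ D, traceCount C (D.erase x) ∅ = traceCount C (A.erase x₀) ∅ :=
      fun D hD x hx => h (by rw [card_erase_of_mem hx, hD]; rfl)
        (by rw [card_erase_of_mem hx₀, hA]; rfl) (empty_subset _) (empty_subset _) rfl
    have hpos : (0 : ℤ) < 1 + w * m - (k + 1 : ℕ) * (m + 1) := by
      push_cast
      linarith
    have eA := traceCount_empty_mul_eq hw hcard hcover hA hn (hconst A hA)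
    have eB := traceCount_empty_mul_eq hw hcard hcover hB hn (hconst B hB)
    exact_mod_cast mul_right_cancel₀ hpos.ne' (eA.trans eB.symm)

end

theorem exists_forall_eq_of_forall_eq {ι β : Type*} [Nonempty β] {p : ι → Prop}
    {f : ι → β} (h : ∀ x y, p x → p y → f x = f y) : ∃ b, ∀ x, p x → f x = b := by
  by_cases hp : ∃ x, p x
  · obtain ⟨x, hx⟩ := hp
    exact ⟨f x, fun y hy => h y x hy hx⟩
  · exact ⟨Classical.arbitrary β, fun y hy => absurd ⟨y, hy⟩ hp⟩

theorem isKRegularCode_of_traceUniform {n k : ℕ} {C : Finset (Finset (Fin n))}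
    (h : TraceUniform C k) : IsKRegularCode n k C := by
  have hncard : ∀ (p : Finset (Fin n) → Prop) [DecidablePred p],
      {c ∈ (C : Set (Finset (Fin n))) | p c}.ncard = #{c ∈ C | p c} := fun p _ => by
    rw [← Set.ncard_coe_finset, coe_filter]; rfl
  constructor
  · choose α hα using fun i => exists_forall_eq_of_forall_eq
      (p := fun A : Finset (Fin n) => #A = k) (f := fun A => #{c ∈ C | #(c ∩ A) = i})
      fun A B hA hB => h.card_filter_card_inter_eq hA hB i
    exact ⟨α, fun A hA i _ => (hncard _).trans (hα i A hA)⟩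
  · intro A hA
    choose β hβ using fun i => exists_forall_eq_of_forall_eq
      (p := fun I : Finset (Fin n) => I ⊆ A ∧ #I = i) (f := fun I => traceCount C A I)
      fun I J hI hJ => h hA hA hI.1 hJ.1 (hI.2.trans hJ.2.symm)
    exact ⟨β, fun I hI => (hncard _).trans (hβ _ I ⟨hI, rfl⟩)⟩

theorem sigma_pos_of_lt_Lwa {w a : ℕ} (hw : 1 ≤ w) {x : ℝ} (hx : x < Lwa w a) :
    0 < x ^ 2 - (2 * w + a + 1) * x + (w * (w + a) + 1) := by
  have hw' : (1 : ℝ) ≤ w := by exact_mod_cast hw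
  have hD : (0 : ℝ) ≤ ((a : ℝ) + 1) ^ 2 + 4 * ((w : ℝ) - 1) := by positivity
  have hs := Real.sq_sqrt hD
  have hsn := Real.sqrt_nonneg (((a : ℝ) + 1) ^ 2 + 4 * ((w : ℝ) - 1))
  rw [Lwa] at hx
  nlinarith

theorem lt_of_lt_Lwa {w a k : ℕ} (hw : 1 ≤ w) (hk : (k : ℝ) < Lwa w a) : k < w := by
  by_contra! hwk
  have hw' : (1 : ℝ) ≤ w := by exact_mod_cast hw
  have := sigma_pos_of_lt_Lwa hw (lt_of_le_of_lt (Nat.cast_le.2 hwk) hk)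
  nlinarith

theorem mul_lt_of_lt_Lwa {w a k : ℕ} (hw : 1 ≤ w) (hk : (k : ℝ) < Lwa w a) :
    k * (w + a - k + 1) < 1 + w * (w + a - k) := by
  have hkw := lt_of_lt_Lwa hw hk
  have hσ := sigma_pos_of_lt_Lwa hw hk
  have hσ' : (0 : ℤ) < k ^ 2 - (2 * w + a + 1) * k + (w * (w + a) + 1) := by exact_mod_cast hσ
  zify [(by omega : k ≤ w + a)]
  nlinarith

theorem stmt_2_general (w a : ℕ) (hw : 1 ≤ w) (C : Set (Finset (Fin (2 * w + a))))
    (hperf : IsOnePerfect (2 * w + a) w C) :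
    ∀ k : ℕ, 0 < k → (k : ℝ) < Lwa w a → IsKRegularCode (2 * w + a) k C := by
  intro k _ hk
  obtain ⟨hcard, hcover⟩ := hperf
  lift C to Finset (Finset (Fin (2 * w + a))) using C.toFinite
  have hkw := lt_of_lt_Lwa hw hk
  exact isKRegularCode_of_traceUniform <|
    traceUniform_of_perfect hw hcard hcover (m := w + a - k)
      (by rw [Fintype.card_fin]; omega) (mul_lt_of_lt_Lwa hw hk)

/-- A nontrivial 1-perfect code in `J(2w+a, w)` is `k`-regular for every positive
integer `k < L(w,a)`. -/
theorem stmt_2 (w a : ℕ) (hw : 1 ≤ w) (C : Set (Finset (Fin (2 * w + a))))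
    (hperf : IsOnePerfect (2 * w + a) w C) (hnontriv : C.Nontrivial) :
    ∀ k : ℕ, 0 < k → (k : ℝ) < Lwa w a → IsKRegularCode (2 * w + a) k C :=
  stmt_2_general w a hw C hperf
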